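/- arXiv:2307.12743 — 2 statements merged into one kernel-verified Lean document; each statement's English description precedes it below -/
import Mathlib

section
/- Lipschitz constants transfer through the Klein geodesic map with bounded loss: if ρ ∈ (0,1), and f is a real-valued function on the closed Euclidean ball B̄(0,ρ) ⊂ ℝ^d that is M-Lipschitz with respect to the Beltrami–Klein distance (i.e., |f(x) − f(y)| ≤ M·d_K(x,y) for all x,y ∈ B̄(0,ρ)), then f is (M/(1−ρ²))-Lipschitz with respect to the Euclidean distance on B̄(0,ρ). -/
open scoped RealInnerProductSpace
open Metric MeasureTheory

/-- Inverse hyperbolic cosine. -/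
noncomputable def arccosh (x : ℝ) : ℝ := Real.log (x + Real.sqrt (x ^ 2 - 1))

/-- Inverse hyperbolic tangent. -/
noncomputable def arctanh (x : ℝ) : ℝ := Real.log ((1 + x) / (1 - x)) / 2

/-- The Beltrami–Klein distance on the open unit ball of `ℝ^d`. -/
noncomputable def kleinDist {d : ℕ} (x y : EuclideanSpace ℝ (Fin d)) : ℝ :=
  arccosh ((1 - ⟪x, y⟫) / (Real.sqrt (1 - ‖x‖ ^ 2) * Real.sqrt (1 - ‖y‖ ^ 2)))


/-!
With `a = 1 - ‖x‖²`, `b = 1 - ‖y‖²` and `A = (1 - ⟪x, y⟫) / √(ab)` the Klein distance is `arccosh A`.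
Since `arccosh A ≤ √(A² - 1)` and
`(1 - ⟪x, y⟫)² - ab = ‖x - y‖² - (‖x‖²‖y‖² - ⟪x, y⟫²) ≤ ‖x - y‖²`,
we get `kleinDist x y ≤ ‖x - y‖ / √(ab) ≤ ‖x - y‖ / (1 - ρ²)` on the ball of radius `ρ`.
-/

open Real

lemma arccosh_le_sqrt_sq_sub_one {t : ℝ} (ht : 1 ≤ t) : arccosh t ≤ √(t ^ 2 - 1) := by
  set s := √(t ^ 2 - 1)
  have hs2 : s ^ 2 = t ^ 2 - 1 := sq_sqrt (by nlinarith)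
  have hs : 0 ≤ s := sqrt_nonneg _
  -- `t ≤ 1 + s² / 2`, so `t + s ≤ 1 + s + s² / 2 ≤ exp s`
  rw [arccosh, log_le_iff_le_exp (by positivity)]
  nlinarith [quadratic_le_exp_of_nonneg hs]

lemma arccosh_pos {t : ℝ} (ht : 1 < t) : 0 < arccosh t :=
  log_pos (by linarith [sqrt_nonneg (t ^ 2 - 1)])

section InnerProductSpace

variable {E : Type*} [SeminormedAddCommGroup E] [InnerProductSpace ℝ E]

lemma one_sub_norm_sq_mul_le_one_sub_inner_sq {x y : E} (hx : ‖x‖ ≤ 1) (hy : ‖y‖ ≤ 1) :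
    (1 - ‖x‖ ^ 2) * (1 - ‖y‖ ^ 2) ≤ (1 - ⟪x, y⟫) ^ 2 := by
  have hxy : 1 - ‖x‖ * ‖y‖ ≤ 1 - ⟪x, y⟫ := by linarith [real_inner_le_norm x y]
  have hxy0 : 0 ≤ 1 - ‖x‖ * ‖y‖ := by nlinarith [norm_nonneg x, norm_nonneg y]
  calc (1 - ‖x‖ ^ 2) * (1 - ‖y‖ ^ 2) = (1 - ‖x‖ * ‖y‖) ^ 2 - (‖x‖ - ‖y‖) ^ 2 := by ring
    _ ≤ (1 - ‖x‖ * ‖y‖) ^ 2 := by nlinarith [sq_nonneg (‖x‖ - ‖y‖)]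
    _ ≤ (1 - ⟪x, y⟫) ^ 2 := pow_le_pow_left₀ hxy0 hxy 2

lemma one_sub_inner_sq_sub_le_norm_sub_sq (x y : E) :
    (1 - ⟪x, y⟫) ^ 2 - (1 - ‖x‖ ^ 2) * (1 - ‖y‖ ^ 2) ≤ ‖x - y‖ ^ 2 := by
  have hcs : ⟪x, y⟫ ^ 2 ≤ ‖x‖ ^ 2 * ‖y‖ ^ 2 := by
    rw [← mul_pow, sq_le_sq]
    simpa [abs_mul] using abs_real_inner_le_norm x y
  nlinarith [norm_sub_sq_real x y]

end InnerProductSpace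

lemma kleinDist_le_of_norm_le {d : ℕ} {ρ : ℝ} (hρ : ρ < 1) {x y : EuclideanSpace ℝ (Fin d)}
    (hx : ‖x‖ ≤ ρ) (hy : ‖y‖ ≤ ρ) : kleinDist x y ≤ ‖x - y‖ / (1 - ρ ^ 2) := by
  have hρ0 : 0 ≤ ρ := (norm_nonneg x).trans hx
  have hρ2 : 0 < 1 - ρ ^ 2 := by nlinarith
  set a := 1 - ‖x‖ ^ 2
  set b := 1 - ‖y‖ ^ 2
  have ha : 1 - ρ ^ 2 ≤ a := by nlinarith [norm_nonneg x]
  have hb : 1 - ρ ^ 2 ≤ b := by nlinarith [norm_nonneg y]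
  have hab : (1 - ρ ^ 2) ^ 2 ≤ a * b := by
    rw [sq]; exact mul_le_mul ha hb hρ2.le (hρ2.le.trans ha)
  have hab0 : 0 < a * b := (pow_pos hρ2 2).trans_le hab
  have hinner : ⟪x, y⟫ ≤ 1 := by
    nlinarith [real_inner_le_norm x y, norm_nonneg x, norm_nonneg y]
  set A := (1 - ⟪x, y⟫) / √(a * b)
  have hA : 1 ≤ A := by
    rw [one_le_div₀ (sqrt_pos.2 hab0), sqrt_le_left (sub_nonneg.2 hinner)]
    exact one_sub_norm_sq_mul_le_one_sub_inner_sq (by linarith) (by linarith)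
  have hA2 : A ^ 2 - 1 = ((1 - ⟪x, y⟫) ^ 2 - a * b) / (a * b) := by
    rw [div_pow, sq_sqrt hab0.le, sub_div, div_self hab0.ne']
  calc kleinDist x y = arccosh A := by rw [kleinDist, ← sqrt_mul (by linarith)]
    _ ≤ √(A ^ 2 - 1) := arccosh_le_sqrt_sq_sub_one hA
    _ ≤ √((‖x - y‖ / (1 - ρ ^ 2)) ^ 2) := by
      gcongr
      rw [hA2, div_pow]
      exact div_le_div₀ (sq_nonneg _) (one_sub_inner_sq_sub_le_norm_sub_sq x y) (by positivity) hab
    _ = ‖x - y‖ / (1 - ρ ^ 2) := sqrt_sq (by positivity)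

lemma kleinDist_zero_left_pos {d : ℕ} {x : EuclideanSpace ℝ (Fin d)} (hx0 : x ≠ 0)
    (hx1 : ‖x‖ < 1) : 0 < kleinDist 0 x := by
  have hx : 0 < 1 - ‖x‖ ^ 2 := by nlinarith [norm_nonneg x]
  refine arccosh_pos ?_
  simp only [inner_zero_left, sub_zero, norm_zero, ne_eq, OfNat.ofNat_ne_zero,
    not_false_eq_true, zero_pow, sqrt_one, one_mul, one_div]
  rw [one_lt_inv₀ (sqrt_pos.2 hx), sqrt_lt' one_pos]
  have := norm_pos_iff.2 hx0
  nlinarith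

theorem klein_lipschitz_transfer_general {d : ℕ} (ρ M : ℝ) (hρ1 : ρ < 1)
    (f : EuclideanSpace ℝ (Fin d) → ℝ)
    (hf : ∀ x ∈ closedBall (0 : EuclideanSpace ℝ (Fin d)) ρ,
      ∀ y ∈ closedBall (0 : EuclideanSpace ℝ (Fin d)) ρ,
        |f x - f y| ≤ M * kleinDist x y) :
    ∀ x ∈ closedBall (0 : EuclideanSpace ℝ (Fin d)) ρ,
      ∀ y ∈ closedBall (0 : EuclideanSpace ℝ (Fin d)) ρ,
        |f x - f y| ≤ (M / (1 - ρ ^ 2)) * ‖x - y‖ := by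
  intro x hx y hy
  obtain rfl | hxy := eq_or_ne x y
  · simp
  -- the ball contains two points at positive Klein distance, so `M` cannot be negative
  have hM : 0 ≤ M := by
    obtain ⟨z, hz, hz0⟩ : ∃ z ∈ closedBall (0 : EuclideanSpace ℝ (Fin d)) ρ, z ≠ 0 := by
      by_cases hx0 : x = 0
      · exact ⟨y, hy, hx0 ▸ hxy.symm⟩
      · exact ⟨x, hx, hx0⟩
    have hz1 : ‖z‖ < 1 := (mem_closedBall_zero_iff.1 hz).trans_lt hρ1
    have h0 : (0 : EuclideanSpace ℝ (Fin d)) ∈ closedBall 0 ρ :=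
      mem_closedBall_self (nonempty_closedBall.1 ⟨z, hz⟩)
    nlinarith [hf 0 h0 z hz, kleinDist_zero_left_pos hz0 hz1, abs_nonneg (f 0 - f z)]
  have hK := kleinDist_le_of_norm_le hρ1 (mem_closedBall_zero_iff.1 hx) (mem_closedBall_zero_iff.1 hy)
  calc |f x - f y| ≤ M * kleinDist x y := hf x hx y hy
    _ ≤ M * (‖x - y‖ / (1 - ρ ^ 2)) := by gcongr
    _ = M / (1 - ρ ^ 2) * ‖x - y‖ := by ring

theorem klein_lipschitz_transfer {d : ℕ} (ρ M : ℝ) (hρ0 : 0 < ρ) (hρ1 : ρ < 1)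
    (f : EuclideanSpace ℝ (Fin d) → ℝ)
    (hf : ∀ x ∈ closedBall (0 : EuclideanSpace ℝ (Fin d)) ρ,
      ∀ y ∈ closedBall (0 : EuclideanSpace ℝ (Fin d)) ρ,
        |f x - f y| ≤ M * kleinDist x y) :
    ∀ x ∈ closedBall (0 : EuclideanSpace ℝ (Fin d)) ρ,
      ∀ y ∈ closedBall (0 : EuclideanSpace ℝ (Fin d)) ρ,
        |f x - f y| ≤ (M / (1 - ρ ^ 2)) * ‖x - y‖ :=
  klein_lipschitz_transfer_general ρ M hρ1 f hf
end

section
/- Restart scheme for geodesically convex optimization on hyperbolic space via the Klein model: let 0 < R ≤ r, ε ∈ (0,1), M > 0, let D = {y in the open unit ball of ℝ^d : d_K(0,y) ≤ r}, and let f : D → ℝ be geodesically convex on D and M-Lipschitz with respect to d_K, with minimum value f*. Let (x_k) be a sequence with x_0 = 0 such that for every k, x_{k+1} ∈ D with d_K(x_k, x_{k+1}) ≤ R and f(x_{k+1}) ≤ inf{f(y) : y ∈ D, d_K(x_k,y) ≤ R} + (ε/4)·M·R. Then for every integer T ≥ (2r/R)·log(2/ε), f(x_T) − f* ≤ ε·M·r.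 -/
open scoped RealInnerProductSpace
open Metric MeasureTheory

/-- The Klein ball of radius `r` about the origin (inside the open unit ball). -/
noncomputable def kleinBall (d : ℕ) (r : ℝ) : Set (EuclideanSpace ℝ (Fin d)) :=
  {y | ‖y‖ < 1 ∧ kleinDist 0 y ≤ r}

/-- Geodesic convexity in the Beltrami–Klein model: convexity along straight chords,
parameterized by Klein arclength. -/
def GeodesicallyConvexOn {d : ℕ} (D : Set (EuclideanSpace ℝ (Fin d)))
    (f : EuclideanSpace ℝ (Fin d) → ℝ) : Prop :=
  ∀ x ∈ D, ∀ y ∈ D, ∀ t ∈ Set.Icc (0 : ℝ) 1,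
    f ((1 - t) • x + t • y) * kleinDist x y ≤
      (kleinDist x y - kleinDist x ((1 - t) • x + t • y)) * f x +
        kleinDist x ((1 - t) • x + t • y) * f y

/-!
Write `δₖ = f xₖ - f x⋆`. The Klein ball `D` is a Euclidean ball, hence convex, and has Klein
diameter at most `2r`. Walking from `xₖ` along the chord towards `x⋆` until Klein distance `R`,
geodesic convexity lowers the gap by the factor `1 - R / d_K(xₖ, x⋆) ≤ 1 - R / (2r)`, so the
inexact restart gives `δₖ₊₁ ≤ (1 - R / (2r)) δₖ + εMR/4`. Unrolling, with `δ₀ ≤ Mr` by the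
Lipschitz bound, `δ_T ≤ (1 - R / (2r))ᵀ Mr + εMr/2`, and the choice of `T` makes the first term
at most `εMr/2`.
-/

open Real Set

lemma arccosh_eq_arcosh : arccosh = Real.arcosh := rfl

section KleinDistance

variable {d : ℕ}

lemma one_le_kleinDist_arg {x y : EuclideanSpace ℝ (Fin d)} (hx : ‖x‖ < 1) (hy : ‖y‖ < 1) :
    1 ≤ (1 - ⟪x, y⟫) / (√(1 - ‖x‖ ^ 2) * √(1 - ‖y‖ ^ 2)) := by
  have hxy : ‖x‖ * ‖y‖ < 1 := mul_lt_one_of_nonneg_of_lt_one_left (norm_nonneg x) hx hy.le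
  have hden : √(1 - ‖x‖ ^ 2) * √(1 - ‖y‖ ^ 2) ≤ 1 - ‖x‖ * ‖y‖ := by
    rw [← sqrt_mul (by nlinarith [norm_nonneg x]), sqrt_le_left (by linarith)]
    nlinarith [sq_nonneg (‖x‖ - ‖y‖)]
  have hpos : 0 < √(1 - ‖x‖ ^ 2) * √(1 - ‖y‖ ^ 2) := by
    apply mul_pos <;> apply sqrt_pos.2 <;> nlinarith [norm_nonneg x, norm_nonneg y]
  rw [one_le_div hpos]
  linarith [real_inner_le_norm x y]

lemma kleinDist_nonneg {x y : EuclideanSpace ℝ (Fin d)} (hx : ‖x‖ < 1) (hy : ‖y‖ < 1) :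
    0 ≤ kleinDist x y :=
  arcosh_nonneg (one_le_kleinDist_arg hx hy)

lemma kleinDist_self {x : EuclideanSpace ℝ (Fin d)} (hx : ‖x‖ < 1) : kleinDist x x = 0 := by
  have hx2 : 0 < 1 - ‖x‖ ^ 2 := by nlinarith [norm_nonneg x]
  rw [kleinDist, real_inner_self_eq_norm_sq, mul_self_sqrt hx2.le, div_self hx2.ne',
    arccosh_eq_arcosh, arcosh_zero]

lemma kleinDist_zero_left (x : EuclideanSpace ℝ (Fin d)) :
    kleinDist 0 x = arcosh (1 / √(1 - ‖x‖ ^ 2)) := by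
  simp [kleinDist, arccosh_eq_arcosh]

lemma one_le_inv_sqrt_one_sub_sq {a : ℝ} (ha : |a| < 1) : 1 ≤ 1 / √(1 - a ^ 2) := by
  have h : 0 < 1 - a ^ 2 := by nlinarith [sq_abs a, abs_nonneg a]
  rw [one_le_div (sqrt_pos.2 h), sqrt_le_one]
  nlinarith [sq_nonneg a]

lemma cosh_kleinDist_zero_left {x : EuclideanSpace ℝ (Fin d)} (hx : ‖x‖ < 1) :
    cosh (kleinDist 0 x) = 1 / √(1 - ‖x‖ ^ 2) := by
  rw [kleinDist_zero_left, cosh_arcosh (one_le_inv_sqrt_one_sub_sq (by rwa [abs_norm]))]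

lemma sinh_kleinDist_zero_left {x : EuclideanSpace ℝ (Fin d)} (hx : ‖x‖ < 1) :
    sinh (kleinDist 0 x) = ‖x‖ / √(1 - ‖x‖ ^ 2) := by
  have h : 0 < 1 - ‖x‖ ^ 2 := by nlinarith [norm_nonneg x]
  have hsq : (1 / √(1 - ‖x‖ ^ 2)) ^ 2 - 1 = (‖x‖ / √(1 - ‖x‖ ^ 2)) ^ 2 := by
    rw [div_pow, div_pow, sq_sqrt h.le]
    field_simp
    ring
  rw [kleinDist_zero_left, sinh_arcosh (one_le_inv_sqrt_one_sub_sq (by rwa [abs_norm])), hsq,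
    sqrt_sq (by positivity)]

lemma kleinDist_zero_left_le_of_norm_le {x y : EuclideanSpace ℝ (Fin d)} (hxy : ‖x‖ ≤ ‖y‖)
    (hy : ‖y‖ < 1) : kleinDist 0 x ≤ kleinDist 0 y := by
  have hx' : 0 < 1 - ‖x‖ ^ 2 := by nlinarith [norm_nonneg x]
  have hy' : 0 < 1 - ‖y‖ ^ 2 := by nlinarith [norm_nonneg y]
  rw [kleinDist_zero_left, kleinDist_zero_left, arcosh_le_arcosh (by positivity) (by positivity)]
  gcongr

lemma kleinDist_le_kleinDist_zero_add {x y : EuclideanSpace ℝ (Fin d)} (hx : ‖x‖ < 1)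
    (hy : ‖y‖ < 1) : kleinDist x y ≤ kleinDist 0 x + kleinDist 0 y := by
  have hx' : 0 < √(1 - ‖x‖ ^ 2) := sqrt_pos.2 (by nlinarith [norm_nonneg x])
  have hy' : 0 < √(1 - ‖y‖ ^ 2) := sqrt_pos.2 (by nlinarith [norm_nonneg y])
  have hcosh : cosh (kleinDist 0 x + kleinDist 0 y) =
      (1 + ‖x‖ * ‖y‖) / (√(1 - ‖x‖ ^ 2) * √(1 - ‖y‖ ^ 2)) := by
    rw [cosh_add, cosh_kleinDist_zero_left hx, cosh_kleinDist_zero_left hy,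
      sinh_kleinDist_zero_left hx, sinh_kleinDist_zero_left hy]
    field_simp
  have harg := one_le_kleinDist_arg hx hy
  have h0 : ‖(0 : EuclideanSpace ℝ (Fin d))‖ < 1 := by simp
  rw [← arcosh_cosh (add_nonneg (kleinDist_nonneg h0 hx) (kleinDist_nonneg h0 hy)),
    kleinDist, arccosh_eq_arcosh, arcosh_le_arcosh (by linarith) (cosh_pos _), hcosh]
  gcongr
  linarith [neg_le_of_abs_le (abs_real_inner_le_norm x y)]

end KleinDistance

section KleinBall

variable {d : ℕ} {r : ℝ}

lemma zero_mem_kleinBall (hr : 0 ≤ r) : (0 : EuclideanSpace ℝ (Fin d)) ∈ kleinBall d r :=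
  ⟨by simp, by rwa [kleinDist_self (by simp)]⟩

lemma kleinBall_subset_ball : kleinBall d r ⊆ ball 0 1 := fun _ hx ↦ mem_ball_zero_iff.2 hx.1

lemma mem_kleinBall_of_norm_le {x y : EuclideanSpace ℝ (Fin d)} (hy : y ∈ kleinBall d r)
    (hxy : ‖x‖ ≤ ‖y‖) : x ∈ kleinBall d r :=
  ⟨hxy.trans_lt hy.1, (kleinDist_zero_left_le_of_norm_le hxy hy.1).trans hy.2⟩

lemma convex_kleinBall : Convex ℝ (kleinBall d r) := by
  intro x hx y hy a b ha hb hab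
  have hnorm : ‖a • x + b • y‖ ≤ max ‖x‖ ‖y‖ :=
    (convexOn_norm convex_univ).le_on_segment (mem_univ x) (mem_univ y) ⟨a, b, ha, hb, hab, rfl⟩
  rcases le_total ‖x‖ ‖y‖ with h | h
  · exact mem_kleinBall_of_norm_le hy (hnorm.trans (max_eq_right h).le)
  · exact mem_kleinBall_of_norm_le hx (hnorm.trans (max_eq_left h).le)

lemma kleinDist_le_two_mul_of_mem_kleinBall {x y : EuclideanSpace ℝ (Fin d)}
    (hx : x ∈ kleinBall d r) (hy : y ∈ kleinBall d r) : kleinDist x y ≤ 2 * r := by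
  linarith [kleinDist_le_kleinDist_zero_add hx.1 hy.1, hx.2, hy.2]

end KleinBall

lemma continuousOn_kleinDist {d : ℕ} {x : EuclideanSpace ℝ (Fin d)} (hx : ‖x‖ < 1) :
    ContinuousOn (kleinDist x) (ball 0 1) := by
  have hden : ∀ y ∈ ball (0 : EuclideanSpace ℝ (Fin d)) 1,
      √(1 - ‖x‖ ^ 2) * √(1 - ‖y‖ ^ 2) ≠ 0 := fun y hy ↦ by
    have hy : ‖y‖ < 1 := mem_ball_zero_iff.1 hy
    apply mul_ne_zero <;> apply (sqrt_pos.2 _).ne' <;> nlinarith [norm_nonneg x, norm_nonneg y]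
  refine continuousOn_arcosh.comp (ContinuousOn.div (by fun_prop) (by fun_prop) hden) ?_
  exact fun y hy ↦ one_le_kleinDist_arg hx (mem_ball_zero_iff.1 hy)

lemma exists_kleinDist_segment_eq {d : ℕ} {x y : EuclideanSpace ℝ (Fin d)} (hx : ‖x‖ < 1)
    (hy : ‖y‖ < 1) {R : ℝ} (hR : 0 ≤ R) (hRxy : R ≤ kleinDist x y) :
    ∃ t ∈ Icc (0 : ℝ) 1, kleinDist x ((1 - t) • x + t • y) = R := by
  have hseg : MapsTo (fun t : ℝ ↦ (1 - t) • x + t • y) (Icc 0 1) (ball 0 1) :=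
    fun t ht ↦ convex_ball 0 1 (mem_ball_zero_iff.2 hx) (mem_ball_zero_iff.2 hy)
      (by linarith [ht.2]) ht.1 (by ring)
  have hcont := (continuousOn_kleinDist hx).comp (by fun_prop) hseg
  refine intermediate_value_Icc zero_le_one hcont ⟨?_, ?_⟩ <;>
    simpa [Function.comp_def, kleinDist_self hx]

lemma GeodesicallyConvexOn.exists_kleinDist_le_sub_le {d : ℕ} {D : Set (EuclideanSpace ℝ (Fin d))}
    {f : EuclideanSpace ℝ (Fin d) → ℝ} (hf : GeodesicallyConvexOn D f) (hD : Convex ℝ D)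
    (hD1 : D ⊆ ball 0 1) {x y : EuclideanSpace ℝ (Fin d)} (hx : x ∈ D) (hy : y ∈ D)
    (hfyx : f y ≤ f x) {R ρ : ℝ} (hR : 0 < R) (hRρ : R ≤ ρ) (hxyρ : kleinDist x y ≤ ρ) :
    ∃ z ∈ D, kleinDist x z ≤ R ∧ f z - f y ≤ (1 - R / ρ) * (f x - f y) := by
  have hgap : 0 ≤ f x - f y := sub_nonneg.2 hfyx
  rcases le_or_gt (kleinDist x y) R with hnear | hfar
  · refine ⟨y, hy, hnear, ?_⟩
    rw [sub_self]
    exact mul_nonneg (sub_nonneg.2 (div_le_one_of_le₀ hRρ (hR.le.trans hRρ))) hgap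
  obtain ⟨t, ht, hzR⟩ := exists_kleinDist_segment_eq (mem_ball_zero_iff.1 (hD1 hx))
    (mem_ball_zero_iff.1 (hD1 hy)) hR.le hfar.le
  refine ⟨_, hD hx hy (by linarith [ht.2]) ht.1 (by ring), hzR.le, ?_⟩
  have hconv := hf x hx y hy t ht
  rw [hzR] at hconv
  have hδ : 0 < kleinDist x y := hR.trans hfar
  calc f ((1 - t) • x + t • y) - f y ≤ (1 - R / kleinDist x y) * (f x - f y) := by
        rw [one_sub_div hδ.ne', div_mul_eq_mul_div, le_div_iff₀ hδ]
        linarith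
    _ ≤ (1 - R / ρ) * (f x - f y) := by gcongr

lemma GeodesicallyConvexOn.sub_le_of_le_sInf_add {d : ℕ} {r R c : ℝ}
    {f : EuclideanSpace ℝ (Fin d) → ℝ} (hf : GeodesicallyConvexOn (kleinBall d r) f)
    {xstar x x' : EuclideanSpace ℝ (Fin d)} (hxstar : xstar ∈ kleinBall d r)
    (hmin : ∀ y ∈ kleinBall d r, f xstar ≤ f y) (hx : x ∈ kleinBall d r) (hR : 0 < R)
    (hRr : R ≤ 2 * r)
    (hx' : f x' ≤ sInf (f '' {y ∈ kleinBall d r | kleinDist x y ≤ R}) + c) :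
    f x' - f xstar ≤ (1 - R / (2 * r)) * (f x - f xstar) + c := by
  obtain ⟨z, hz, hxz, hfz⟩ := hf.exists_kleinDist_le_sub_le convex_kleinBall
    kleinBall_subset_ball hx hxstar (hmin x hx) hR hRr
    (kleinDist_le_two_mul_of_mem_kleinBall hx hxstar)
  have hbdd : BddBelow (f '' {y ∈ kleinBall d r | kleinDist x y ≤ R}) :=
    ⟨f xstar, by rintro _ ⟨y, hy, rfl⟩; exact hmin y hy.1⟩
  linarith [csInf_le hbdd ⟨z, ⟨hz, hxz⟩, rfl⟩]

lemma le_pow_mul_add_div_of_le_mul_add {u : ℕ → ℝ} {q c : ℝ} (hq : 0 < q) (hq1 : q ≤ 1)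
    (hc : 0 ≤ c) (hu : ∀ k, u (k + 1) ≤ (1 - q) * u k + c) (k : ℕ) :
    u k ≤ (1 - q) ^ k * u 0 + c / q := by
  induction k with
  | zero => simpa using div_nonneg hc hq.le
  | succ k ih =>
    calc u (k + 1) ≤ (1 - q) * ((1 - q) ^ k * u 0 + c / q) + c :=
          (hu k).trans (by gcongr)
      _ = (1 - q) ^ (k + 1) * u 0 + c / q := by field_simp; ring

lemma one_sub_pow_le_of_log_inv_le {q a : ℝ} {n : ℕ} (hq : q ≤ 1) (ha : 0 < a)
    (h : log a⁻¹ ≤ q * n) : (1 - q) ^ n ≤ a := by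
  have hpow : (1 - q) ^ n = (1 - q * n / n) ^ n := by
    rcases n.eq_zero_or_pos with rfl | hn
    · simp
    · rw [mul_div_cancel_right₀ _ (by positivity)]
  calc (1 - q) ^ n ≤ exp (-(q * n)) := hpow ▸ one_sub_div_pow_le_exp_neg (by nlinarith)
    _ ≤ exp (-log a⁻¹) := exp_le_exp.2 (neg_le_neg h)
    _ = a := by rw [log_inv, neg_neg, exp_log ha]

theorem restart_scheme_general {d : ℕ} (r R ε M : ℝ) (hR : 0 < R) (hRr : R ≤ r)
    (hε0 : 0 < ε) (hM : 0 < M)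
    (f : EuclideanSpace ℝ (Fin d) → ℝ)
    (hconv : GeodesicallyConvexOn (kleinBall d r) f)
    (hlip : ∀ x ∈ kleinBall d r, ∀ y ∈ kleinBall d r, |f x - f y| ≤ M * kleinDist x y)
    (xstar : EuclideanSpace ℝ (Fin d)) (hxstar : xstar ∈ kleinBall d r)
    (hmin : ∀ y ∈ kleinBall d r, f xstar ≤ f y)
    (x : ℕ → EuclideanSpace ℝ (Fin d)) (hx0 : x 0 = 0)
    (hstep : ∀ k : ℕ, x (k + 1) ∈ kleinBall d r ∧ kleinDist (x k) (x (k + 1)) ≤ R ∧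
      f (x (k + 1)) ≤ sInf (f '' {y ∈ kleinBall d r | kleinDist (x k) y ≤ R}) + (ε / 4) * M * R)
    (T : ℕ) (hT : (2 * r / R) * Real.log (2 / ε) ≤ T) :
    f (x T) - f xstar ≤ ε * M * r := by
  have hr : 0 < r := hR.trans_le hRr
  have hxmem : ∀ k, x k ∈ kleinBall d r
    | 0 => hx0 ▸ zero_mem_kleinBall hr.le
    | k + 1 => (hstep k).1
  have hgap := le_pow_mul_add_div_of_le_mul_add (u := fun k ↦ f (x k) - f xstar)
    (q := R / (2 * r)) (by positivity) (div_le_one_of_le₀ (by linarith) (by positivity))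
    (by positivity)
    (fun k ↦ hconv.sub_le_of_le_sInf_add hxstar hmin (hxmem k) hR (by linarith) (hstep k).2.2) T
  have hgap0 : f (x 0) - f xstar ≤ M * r := by
    calc f (x 0) - f xstar ≤ M * kleinDist (x 0) xstar :=
          (le_abs_self _).trans (hlip _ (hxmem 0) _ hxstar)
      _ ≤ M * r := by rw [hx0]; gcongr; exact hxstar.2
  have hpow : (1 - R / (2 * r)) ^ T ≤ ε / 2 := by
    refine one_sub_pow_le_of_log_inv_le (div_le_one_of_le₀ (by linarith) (by positivity))
      (by positivity) ?_
    calc log (ε / 2)⁻¹ = R / (2 * r) * (2 * r / R * log (2 / ε)) := by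
          rw [inv_div]; field_simp
      _ ≤ R / (2 * r) * T := by gcongr
  calc f (x T) - f xstar
      ≤ (1 - R / (2 * r)) ^ T * (f (x 0) - f xstar) + ε / 4 * M * R / (R / (2 * r)) := hgap
    _ ≤ ε / 2 * (M * r) + ε / 4 * M * R / (R / (2 * r)) := by
        gcongr
        exact sub_nonneg.2 (hmin _ (hxmem 0))
    _ = ε * M * r := by field_simp; ring

theorem restart_scheme {d : ℕ} (r R ε M : ℝ) (hR : 0 < R) (hRr : R ≤ r)
    (hε0 : 0 < ε) (hε1 : ε < 1) (hM : 0 < M)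
    (f : EuclideanSpace ℝ (Fin d) → ℝ)
    (hconv : GeodesicallyConvexOn (kleinBall d r) f)
    (hlip : ∀ x ∈ kleinBall d r, ∀ y ∈ kleinBall d r, |f x - f y| ≤ M * kleinDist x y)
    (xstar : EuclideanSpace ℝ (Fin d)) (hxstar : xstar ∈ kleinBall d r)
    (hmin : ∀ y ∈ kleinBall d r, f xstar ≤ f y)
    (x : ℕ → EuclideanSpace ℝ (Fin d)) (hx0 : x 0 = 0)
    (hstep : ∀ k : ℕ, x (k + 1) ∈ kleinBall d r ∧ kleinDist (x k) (x (k + 1)) ≤ R ∧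
      f (x (k + 1)) ≤ sInf (f '' {y ∈ kleinBall d r | kleinDist (x k) y ≤ R}) + (ε / 4) * M * R)
    (T : ℕ) (hT : (2 * r / R) * Real.log (2 / ε) ≤ T) :
    f (x T) - f xstar ≤ ε * M * r :=
  restart_scheme_general r R ε M hR hRr hε0 hM f hconv hlip xstar hxstar hmin x hx0 hstep T hT
end
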